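/- For every p ∈ (0,1) there is a constant C(p) ∈ (0,∞) such that for all integers k ≥ 1, all s₀ ∈ (0,∞) and all T ∈ (0,∞): ∫_{(0,T)^k} ∏_{j=1}^k 1/(2 s_j + s_{j-1}) d(s₁,…,s_k) ≤ C(p)^k (T/s₀)^p. -/

import Mathlib

/-!
Integrating out `s₁` first writes the `k`-fold integral as `∫₀ᵀ ds₁ / (2 s₁ + s₀)` times the
`(k-1)`-fold integral with `s₁` in the role of `s₀`. The bound `C^k (T/x)^p` therefore propagates
by induction on `k`, by the one-dimensional estimate
`∫₀ᵀ (T/x)^p / (2x + a) dx ≤ (1/(1-p) + 1/p) (T/a)^p`, obtained by splitting `(0, ∞)` at `a` and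
using `2x + a ≥ a` on `(0, a]` and `2x + a ≥ x` beyond. The starting point `x` of each inner
integral lies in `(0, T)`, which gives the base case `1 ≤ (T/x)^p`.
-/

open MeasureTheory Set
open scoped ENNReal

noncomputable section

-- `Fin.cons s₀ s j.castSucc` is the paper's `s_{j-1}`.
def chainWeight (k : ℕ) (s₀ : ℝ) (s : Fin k → ℝ) : ℝ :=
  ∏ j : Fin k, 1 / (2 * s j + (Fin.cons s₀ s : Fin (k + 1) → ℝ) j.castSucc)

lemma chainWeight_eq_prod_ite (k : ℕ) (s₀ : ℝ) (s : Fin k → ℝ) :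
    chainWeight k s₀ s = ∏ j : Fin k, 1 / (2 * s j +
      (if (j : ℕ) = 0 then s₀
       else s ⟨(j : ℕ) - 1, Nat.lt_of_le_of_lt (Nat.sub_le _ _) j.isLt⟩)) := by
  refine Finset.prod_congr rfl fun j _ => ?_
  obtain ⟨_ | i, hi⟩ := j
  · rfl
  · exact congrArg (fun y => 1 / (2 * s _ + y))
      (Fin.cons_succ (α := fun _ => ℝ) s₀ s ⟨i, by omega⟩)

@[fun_prop]
lemma measurable_chainWeight (k : ℕ) (s₀ : ℝ) : Measurable (chainWeight k s₀) := by
  unfold chainWeight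
  fun_prop

lemma chainWeight_cons (k : ℕ) (s₀ x : ℝ) (t : Fin k → ℝ) :
    chainWeight (k + 1) s₀ (Fin.cons x t) = 1 / (2 * x + s₀) * chainWeight k x t := by
  simp only [chainWeight, Fin.prod_univ_succ, Fin.cons_zero, Fin.castSucc_zero, Fin.cons_succ,
    ← Fin.succ_castSucc]

lemma chainWeight_nonneg {k : ℕ} {s₀ : ℝ} (hs₀ : 0 ≤ s₀) {s : Fin k → ℝ} (hs : ∀ j, 0 ≤ s j) :
    0 ≤ chainWeight k s₀ s := by
  refine Finset.prod_nonneg fun j _ => one_div_nonneg.2 ?_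
  have : 0 ≤ (Fin.cons s₀ s : Fin (k + 1) → ℝ) j.castSucc :=
    Fin.cases (motive := fun i => 0 ≤ (Fin.cons s₀ s : Fin (k + 1) → ℝ) i) hs₀ hs _
  linarith [hs j]

def chainLIntegral (T : ℝ) (k : ℕ) (s₀ : ℝ) : ℝ≥0∞ :=
  ∫⁻ s, ENNReal.ofReal (chainWeight k s₀ s) ∂Measure.pi fun _ : Fin k => volume.restrict (Ioo 0 T)

lemma chainLIntegral_zero (T s₀ : ℝ) : chainLIntegral T 0 s₀ = 1 := by
  simp [chainLIntegral, chainWeight]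

lemma chainLIntegral_succ (T : ℝ) (k : ℕ) {s₀ : ℝ} (hs₀ : 0 ≤ s₀) :
    chainLIntegral T (k + 1) s₀
      = ∫⁻ x in Ioo 0 T, ENNReal.ofReal (1 / (2 * x + s₀)) * chainLIntegral T k x := by
  set μ : Measure ℝ := volume.restrict (Ioo 0 T)
  have hsplit := (measurePreserving_piFinSuccAbove (fun _ : Fin (k + 1) => μ) 0).symm
  have hcons : ⇑(MeasurableEquiv.piFinSuccAbove (fun _ : Fin (k + 1) => ℝ) 0).symm
      = fun y : ℝ × (Fin k → ℝ) => Fin.cons y.1 y.2 := by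
    ext y
    simp [MeasurableEquiv.piFinSuccAbove, Fin.insertNthEquiv]
  rw [chainLIntegral, ← hsplit.lintegral_comp (by fun_prop), hcons,
    lintegral_prod _ (by fun_prop)]
  refine setLIntegral_congr_fun measurableSet_Ioo fun x hx => ?_
  have hw : 0 ≤ 1 / (2 * x + s₀) := one_div_nonneg.2 (by linarith [hx.1])
  simp only [chainLIntegral, chainWeight_cons, ENNReal.ofReal_mul hw]
  exact lintegral_const_mul' _ _ ENNReal.ofReal_ne_top

lemma lintegral_Ioc_rpow_neg {p : ℝ} (hp : p < 1) {a : ℝ} (ha : 0 ≤ a) :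
    ∫⁻ x in Ioc 0 a, ENNReal.ofReal (x ^ (-p)) = ENNReal.ofReal (a ^ (1 - p) / (1 - p)) := by
  have hint : IntegrableOn (fun x : ℝ => x ^ (-p)) (Ioc 0 a) :=
    (intervalIntegrable_iff_integrableOn_Ioc_of_le ha).1
      (intervalIntegral.intervalIntegrable_rpow' (by linarith))
  rw [← ofReal_integral_eq_lintegral_ofReal hint
      ((ae_restrict_iff' measurableSet_Ioc).2 (.of_forall fun x hx => Real.rpow_nonneg hx.1.le _)),
    ← intervalIntegral.integral_of_le ha, integral_rpow (.inl (by linarith)),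
    Real.zero_rpow (by linarith), neg_add_eq_sub, sub_zero]

lemma lintegral_Ioi_rpow_neg_sub_one {p : ℝ} (hp : 0 < p) {a : ℝ} (ha : 0 < a) :
    ∫⁻ x in Ioi a, ENNReal.ofReal (x ^ (-p - 1)) = ENNReal.ofReal (a ^ (-p) / p) := by
  rw [← ofReal_integral_eq_lintegral_ofReal (integrableOn_Ioi_rpow_of_lt (by linarith) ha)
      ((ae_restrict_iff' measurableSet_Ioi).2
        (.of_forall fun x (hx : a < x) => Real.rpow_nonneg (ha.trans hx).le _)),
    integral_Ioi_rpow_of_lt (by linarith) ha, sub_add_cancel, neg_div_neg_eq]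

lemma lintegral_Ioi_rpow_neg_div_le {p : ℝ} (hp₀ : 0 < p) (hp₁ : p < 1) {a : ℝ} (ha : 0 < a) :
    ∫⁻ x in Ioi 0, ENNReal.ofReal (x ^ (-p) / (2 * x + a))
      ≤ ENNReal.ofReal ((1 / (1 - p) + 1 / p) * a ^ (-p)) := by
  have near : ∫⁻ x in Ioc 0 a, ENNReal.ofReal (x ^ (-p) / (2 * x + a))
      ≤ ENNReal.ofReal (a ^ (-p) / (1 - p)) := by
    calc ∫⁻ x in Ioc 0 a, ENNReal.ofReal (x ^ (-p) / (2 * x + a))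
        ≤ ∫⁻ x in Ioc 0 a, ENNReal.ofReal a⁻¹ * ENNReal.ofReal (x ^ (-p)) := by
          refine setLIntegral_mono' measurableSet_Ioc fun x hx => ?_
          rw [← ENNReal.ofReal_mul (by positivity), div_eq_inv_mul]
          have : 0 ≤ x ^ (-p) := Real.rpow_nonneg hx.1.le _
          gcongr
          linarith [hx.1]
      _ = ENNReal.ofReal (a ^ (-p) / (1 - p)) := by
          rw [lintegral_const_mul' _ _ ENNReal.ofReal_ne_top, lintegral_Ioc_rpow_neg hp₁ ha.le,
            ← ENNReal.ofReal_mul (by positivity), ← mul_div_assoc, ← Real.rpow_neg_one,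
            ← Real.rpow_add ha]
          ring_nf
  have far : ∫⁻ x in Ioi a, ENNReal.ofReal (x ^ (-p) / (2 * x + a))
      ≤ ENNReal.ofReal (a ^ (-p) / p) := by
    rw [← lintegral_Ioi_rpow_neg_sub_one hp₀ ha]
    refine setLIntegral_mono' measurableSet_Ioi fun x (hx : a < x) => ?_
    have hx₀ : 0 < x := ha.trans hx
    rw [Real.rpow_sub hx₀, Real.rpow_one]
    gcongr
    linarith
  calc ∫⁻ x in Ioi 0, ENNReal.ofReal (x ^ (-p) / (2 * x + a))
      ≤ (∫⁻ x in Ioc 0 a, ENNReal.ofReal (x ^ (-p) / (2 * x + a)))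
          + ∫⁻ x in Ioi a, ENNReal.ofReal (x ^ (-p) / (2 * x + a)) := by
        rw [← Ioc_union_Ioi_eq_Ioi ha.le]
        exact lintegral_union_le _ _ _
    _ ≤ ENNReal.ofReal (a ^ (-p) / (1 - p)) + ENNReal.ofReal (a ^ (-p) / p) := add_le_add near far
    _ = ENNReal.ofReal ((1 / (1 - p) + 1 / p) * a ^ (-p)) := by
        rw [← ENNReal.ofReal_add (by bound) (by positivity)]
        ring_nf

lemma lintegral_Ioo_div_rpow_div_le {p : ℝ} (hp₀ : 0 < p) (hp₁ : p < 1) {T a : ℝ} (hT : 0 ≤ T)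
    (ha : 0 < a) :
    ∫⁻ x in Ioo 0 T, ENNReal.ofReal ((T / x) ^ p / (2 * x + a))
      ≤ ENNReal.ofReal ((1 / (1 - p) + 1 / p) * (T / a) ^ p) := by
  calc ∫⁻ x in Ioo 0 T, ENNReal.ofReal ((T / x) ^ p / (2 * x + a))
      = ∫⁻ x in Ioo 0 T, ENNReal.ofReal (T ^ p) * ENNReal.ofReal (x ^ (-p) / (2 * x + a)) := by
        refine setLIntegral_congr_fun measurableSet_Ioo fun x hx => ?_
        rw [← ENNReal.ofReal_mul (by positivity), Real.div_rpow hT hx.1.le,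
          Real.rpow_neg hx.1.le]
        ring_nf
    _ ≤ ENNReal.ofReal (T ^ p) * ∫⁻ x in Ioi 0, ENNReal.ofReal (x ^ (-p) / (2 * x + a)) := by
        rw [lintegral_const_mul' _ _ ENNReal.ofReal_ne_top]
        gcongr
        exact Ioo_subset_Ioi_self
    _ ≤ ENNReal.ofReal (T ^ p) * ENNReal.ofReal ((1 / (1 - p) + 1 / p) * a ^ (-p)) := by
        gcongr
        exact lintegral_Ioi_rpow_neg_div_le hp₀ hp₁ ha
    _ = ENNReal.ofReal ((1 / (1 - p) + 1 / p) * (T / a) ^ p) := by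
        rw [← ENNReal.ofReal_mul (by positivity), Real.div_rpow hT ha.le, Real.rpow_neg ha.le]
        ring_nf

lemma chainLIntegral_succ_le {p : ℝ} (hp₀ : 0 < p) (hp₁ : p < 1) {T M : ℝ} (hT : 0 ≤ T)
    (hM : 0 ≤ M) {k : ℕ}
    (hk : ∀ x ∈ Ioo 0 T, chainLIntegral T k x ≤ ENNReal.ofReal (M * (T / x) ^ p))
    {s₀ : ℝ} (hs₀ : 0 < s₀) :
    chainLIntegral T (k + 1) s₀ ≤ ENNReal.ofReal ((1 / (1 - p) + 1 / p) * M * (T / s₀) ^ p) := by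
  rw [chainLIntegral_succ T k hs₀.le]
  calc ∫⁻ x in Ioo 0 T, ENNReal.ofReal (1 / (2 * x + s₀)) * chainLIntegral T k x
      ≤ ∫⁻ x in Ioo 0 T, ENNReal.ofReal M * ENNReal.ofReal ((T / x) ^ p / (2 * x + s₀)) := by
        refine setLIntegral_mono' measurableSet_Ioo fun x hx => ?_
        have hx₀ : 0 ≤ 2 * x + s₀ := by linarith [hx.1]
        calc ENNReal.ofReal (1 / (2 * x + s₀)) * chainLIntegral T k x
            ≤ ENNReal.ofReal (1 / (2 * x + s₀)) * ENNReal.ofReal (M * (T / x) ^ p) := by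
              gcongr
              exact hk x hx
          _ = ENNReal.ofReal M * ENNReal.ofReal ((T / x) ^ p / (2 * x + s₀)) := by
              rw [← ENNReal.ofReal_mul (by positivity), ← ENNReal.ofReal_mul hM]
              ring_nf
    _ = ENNReal.ofReal M * ∫⁻ x in Ioo 0 T, ENNReal.ofReal ((T / x) ^ p / (2 * x + s₀)) :=
        lintegral_const_mul' _ _ ENNReal.ofReal_ne_top
    _ ≤ ENNReal.ofReal M * ENNReal.ofReal ((1 / (1 - p) + 1 / p) * (T / s₀) ^ p) := by
        gcongr
        exact lintegral_Ioo_div_rpow_div_le hp₀ hp₁ hT hs₀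
    _ = ENNReal.ofReal ((1 / (1 - p) + 1 / p) * M * (T / s₀) ^ p) := by
        rw [← ENNReal.ofReal_mul hM]
        ring_nf

lemma chainLIntegral_le {p : ℝ} (hp₀ : 0 < p) (hp₁ : p < 1) {T : ℝ} (k : ℕ) {x : ℝ}
    (hx : x ∈ Ioo 0 T) :
    chainLIntegral T k x ≤ ENNReal.ofReal ((1 / (1 - p) + 1 / p) ^ k * (T / x) ^ p) := by
  have hC : 0 ≤ 1 / (1 - p) + 1 / p := by bound
  induction k generalizing x with
  | zero =>
    rw [chainLIntegral_zero, pow_zero, one_mul, ← ENNReal.ofReal_one]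
    exact ENNReal.ofReal_le_ofReal
      (Real.one_le_rpow ((one_le_div hx.1).2 hx.2.le) hp₀.le)
  | succ k ih =>
    rw [pow_succ']
    exact chainLIntegral_succ_le hp₀ hp₁ (hx.1.trans hx.2).le (by positivity) (fun _ => ih) hx.1

lemma setIntegral_chainWeight (T : ℝ) (k : ℕ) {s₀ : ℝ} (hs₀ : 0 ≤ s₀) :
    ∫ s in univ.pi fun _ : Fin k => Ioo 0 T, chainWeight k s₀ s
      = (chainLIntegral T k s₀).toReal := by
  rw [integral_eq_lintegral_of_nonneg_ae _ (measurable_chainWeight k s₀).aestronglyMeasurable,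
    volume_pi, Measure.restrict_pi_pi, chainLIntegral]
  exact (ae_restrict_mem (.univ_pi fun _ => measurableSet_Ioo)).mono fun s hs =>
    chainWeight_nonneg hs₀ fun j => (hs j (mem_univ j)).1.le

end

theorem stmt_1 :
    ∀ p : ℝ, p ∈ Set.Ioo (0:ℝ) 1 → ∃ C : ℝ, 0 < C ∧
      ∀ k : ℕ, 1 ≤ k → ∀ s₀ T : ℝ, 0 < s₀ → 0 < T →
        (∫ s in Set.univ.pi (fun _ : Fin k => Set.Ioo (0:ℝ) T),
            ∏ j : Fin k, 1 / (2 * s j +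
              (if (j : ℕ) = 0 then s₀
               else s ⟨(j : ℕ) - 1, Nat.lt_of_le_of_lt (Nat.sub_le _ _) j.isLt⟩)))
          ≤ C ^ k * (T / s₀) ^ p := by
  rintro p ⟨hp₀, hp₁⟩
  have hC : 0 < 1 / (1 - p) + 1 / p := by have := sub_pos.2 hp₁; positivity
  refine ⟨1 / (1 - p) + 1 / p, hC, fun k hk s₀ T hs₀ hT => ?_⟩
  obtain ⟨m, rfl⟩ : ∃ m, k = m + 1 := ⟨k - 1, by omega⟩
  simp_rw [← chainWeight_eq_prod_ite, setIntegral_chainWeight T _ hs₀.le, pow_succ']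
  exact ENNReal.toReal_le_of_le_ofReal (by positivity) <|
    chainLIntegral_succ_le hp₀ hp₁ hT.le (by positivity) (fun _ => chainLIntegral_le hp₀ hp₁ m) hs₀
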